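/- For θ = (m, σ) with m ∈ ℝ, σ > 0, let p_θ(x) = (2πσ²)^{−1/2} exp(−(x − m)²/(2σ²)) be the N(m, σ²) density, and for n ≥ 1 let p_θ(xⁿ) = ∏_{i=1}^n p_θ(x_i) be the corresponding product density on ℝⁿ. Then for every n ≥ 1, the Yatracos class 𝒜_n = { { xⁿ ∈ ℝⁿ : p_θ(xⁿ) > p_{θ'}(xⁿ) } : θ ≠ θ' } is a VC class with VC dimension at most 12 log₂(12 e). -/

import Mathlib

open scoped Real

/-- A collection `𝒞` of subsets of `Z` shatters a finite set `S` if for every `B ⊆ S` there is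
`A ∈ 𝒞` with `A ∩ S = B`. -/
def Shatters {Z : Type*} (𝒞 : Set (Set Z)) (S : Finset Z) : Prop :=
  ∀ B ⊆ S, ∃ A ∈ 𝒞, ∀ z ∈ S, z ∈ A ↔ z ∈ B

/-- The `N(m,σ²)` density on `ℝ`. -/
noncomputable def gaussDensity (m σ x : ℝ) : ℝ :=
  (Real.sqrt (2 * π * σ ^ 2))⁻¹ * Real.exp (-(x - m) ^ 2 / (2 * σ ^ 2))

/-! The Gaussian family is an exponential family: `log p_θ(xⁿ) = ⟨η(θ), T(xⁿ)⟩` with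
`T(xⁿ) = (∑ xᵢ², ∑ xᵢ, n) ∈ ℝ³`, so every Yatracos set is the preimage under `T` of an open
halfspace `{v | ⟨η(θ) - η(θ'), v⟩ > 0}`. Such preimages cannot shatter a set `S` on which `T`
is linearly dependent: given `∑_{z ∈ S} g z • T z = 0` with some `g z < 0`, a functional `ℓ`
realizing `{z ∈ S | g z ≤ 0}` would make every term of `∑ g z ℓ (T z) = 0` nonpositive and one
negative. Hence shattered sets have at most `3 ≤ 12 log₂(12e)` points. -/

section Halfspaces

variable {𝕜 V Z : Type*} [Field 𝕜] [LinearOrder 𝕜] [IsStrictOrderedRing 𝕜]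
  [AddCommGroup V] [Module 𝕜 V]

theorem not_shatters_of_sum_smul_eq_zero (φ : Z → V) {𝒞 : Set (Set Z)}
    (h𝒞 : 𝒞 ⊆ Set.range fun ℓ : Module.Dual 𝕜 V => {z | 0 < ℓ (φ z)}) {S : Finset Z}
    {g : Z → 𝕜} (hg : ∑ z ∈ S, g z • φ z = 0) {z₀ : Z} (hz₀S : z₀ ∈ S) (hz₀ : g z₀ < 0) :
    ¬ Shatters 𝒞 S := by
  classical
  intro hS
  obtain ⟨A, hA𝒞, hA⟩ := hS (S.filter fun z => g z ≤ 0) (Finset.filter_subset _ _)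
  obtain ⟨ℓ, rfl⟩ := h𝒞 hA𝒞
  have hmem : ∀ z ∈ S, 0 < ℓ (φ z) ↔ g z ≤ 0 := fun z hz => by
    simpa [hz] using hA z hz
  have hterm : ∀ z ∈ S, g z * ℓ (φ z) ≤ 0 := fun z hz => by
    rcases le_or_gt (g z) 0 with hgz | hgz
    · exact mul_nonpos_of_nonpos_of_nonneg hgz ((hmem z hz).2 hgz).le
    · exact mul_nonpos_of_nonneg_of_nonpos hgz.le (not_lt.1 fun h => ((hmem z hz).1 h).not_gt hgz)
  have hneg : ∑ z ∈ S, g z * ℓ (φ z) < 0 :=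
    Finset.sum_neg' hterm ⟨z₀, hz₀S, mul_neg_of_neg_of_pos hz₀ ((hmem z₀ hz₀S).2 hz₀.le)⟩
  have hzero : ∑ z ∈ S, g z * ℓ (φ z) = 0 := by
    simpa [map_sum, smul_eq_mul] using congrArg ℓ hg
  exact hneg.ne hzero

theorem Shatters.linearIndepOn (φ : Z → V) {𝒞 : Set (Set Z)}
    (h𝒞 : 𝒞 ⊆ Set.range fun ℓ : Module.Dual 𝕜 V => {z | 0 < ℓ (φ z)}) {S : Finset Z}
    (hS : Shatters 𝒞 S) : LinearIndepOn 𝕜 φ S := by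
  classical
  rw [linearIndepOn_finset_iff]
  by_contra! ⟨g, hg, z₀, hz₀S, hz₀⟩
  rcases hz₀.lt_or_gt with hneg | hpos
  · exact not_shatters_of_sum_smul_eq_zero φ h𝒞 hg hz₀S hneg hS
  · refine not_shatters_of_sum_smul_eq_zero φ h𝒞 (g := -g) ?_ hz₀S (neg_neg_of_pos hpos) hS
    simp [neg_smul, hg]

theorem Shatters.card_le_finrank [FiniteDimensional 𝕜 V] (φ : Z → V) {𝒞 : Set (Set Z)}
    (h𝒞 : 𝒞 ⊆ Set.range fun ℓ : Module.Dual 𝕜 V => {z | 0 < ℓ (φ z)}) {S : Finset Z}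
    (hS : Shatters 𝒞 S) : S.card ≤ Module.finrank 𝕜 V := by
  simpa using (hS.linearIndepOn φ h𝒞).fintype_card_le_finrank

end Halfspaces

section Gaussian

open Real

noncomputable def gaussStat {n : ℕ} (x : Fin n → ℝ) : Fin 3 → ℝ :=
  ∑ i, ![x i ^ 2, x i, 1]

noncomputable def gaussNatParam (m σ : ℝ) : Fin 3 → ℝ :=
  ![-(1 / (2 * σ ^ 2)), m / σ ^ 2, -(m ^ 2 / (2 * σ ^ 2) + log σ + log (2 * π) / 2)]

theorem gaussDensity_pos (m x : ℝ) {σ : ℝ} (hσ : 0 < σ) : 0 < gaussDensity m σ x := by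
  unfold gaussDensity
  have : 0 < 2 * π * σ ^ 2 := by positivity
  positivity

theorem log_gaussDensity (m x : ℝ) {σ : ℝ} (hσ : 0 < σ) :
    log (gaussDensity m σ x) = gaussNatParam m σ ⬝ᵥ ![x ^ 2, x, 1] := by
  unfold gaussDensity
  rw [log_mul (by positivity) (exp_ne_zero _), log_inv, log_exp,
    log_sqrt (by positivity), log_mul (by positivity) (by positivity), log_pow]
  simp only [gaussNatParam, dotProduct, Fin.sum_univ_three, Matrix.cons_val_zero,
    Matrix.cons_val_one, Matrix.cons_val_two, Matrix.head_cons, Matrix.tail_cons]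
  field_simp
  ring

theorem log_prod_gaussDensity {n : ℕ} (m : ℝ) {σ : ℝ} (hσ : 0 < σ) (x : Fin n → ℝ) :
    log (∏ i, gaussDensity m σ (x i)) = gaussNatParam m σ ⬝ᵥ gaussStat x := by
  simp only [log_prod fun i _ => (gaussDensity_pos m (x i) hσ).ne', log_gaussDensity _ _ hσ,
    gaussStat, dotProduct_sum]

theorem prod_gaussDensity_lt_prod_iff {n : ℕ} {m σ m' σ' : ℝ} (hσ : 0 < σ) (hσ' : 0 < σ')
    (x : Fin n → ℝ) :
    ∏ i, gaussDensity m' σ' (x i) < ∏ i, gaussDensity m σ (x i) ↔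
      0 < (gaussNatParam m σ - gaussNatParam m' σ') ⬝ᵥ gaussStat x := by
  rw [← log_lt_log_iff (Finset.prod_pos fun i _ => gaussDensity_pos m' (x i) hσ')
      (Finset.prod_pos fun i _ => gaussDensity_pos m (x i) hσ),
    log_prod_gaussDensity m' hσ', log_prod_gaussDensity m hσ, sub_dotProduct, sub_pos]

end Gaussian

theorem stmt_10_general (n : ℕ) (𝒜 : Set (Set (Fin n → ℝ)))
    (h𝒜 : 𝒜 = {A | ∃ m σ m' σ' : ℝ, 0 < σ ∧ 0 < σ' ∧ (m, σ) ≠ (m', σ') ∧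
      A = {x | ∏ i, gaussDensity m' σ' (x i) < ∏ i, gaussDensity m σ (x i)}}) :
    ∀ S : Finset (Fin n → ℝ), Shatters 𝒜 S →
      (S.card : ℝ) ≤ 12 * Real.logb 2 (12 * Real.exp 1) := by
  intro S hS
  have h𝒜_halfspaces :
      𝒜 ⊆ Set.range fun ℓ : Module.Dual ℝ (Fin 3 → ℝ) => {x | 0 < ℓ (gaussStat x)} := by
    rintro A hA
    rw [h𝒜] at hA
    obtain ⟨m, σ, m', σ', hσ, hσ', -, rfl⟩ := hA
    refine ⟨dotProductEquiv ℝ (Fin 3) (gaussNatParam m σ - gaussNatParam m' σ'), ?_⟩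
    ext x
    exact (prod_gaussDensity_lt_prod_iff hσ hσ' x).symm
  have hcard : S.card ≤ 3 := by
    simpa using hS.card_le_finrank gaussStat h𝒜_halfspaces
  have hlog : 1 ≤ Real.logb 2 (12 * Real.exp 1) := by
    rw [Real.le_logb_iff_rpow_le one_lt_two (by positivity), Real.rpow_one]
    nlinarith [Real.add_one_le_exp (1 : ℝ)]
  have : (S.card : ℝ) ≤ 3 := by exact_mod_cast hcard
  linarith

/-- **VC dimension of the Gaussian Yatracos class.** For every `n ≥ 1`, the Yatracos class of
the `n`-fold product Gaussian densities, `𝒜_n = { {xⁿ : p_θ(xⁿ) > p_{θ'}(xⁿ)} : θ ≠ θ' }`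
with `θ = (m,σ)`, `σ > 0`, is a VC class with VC dimension at most `12 log₂(12e)`. -/
theorem stmt_10 (n : ℕ) (hn : 1 ≤ n) (𝒜 : Set (Set (Fin n → ℝ)))
    (h𝒜 : 𝒜 = {A | ∃ m σ m' σ' : ℝ, 0 < σ ∧ 0 < σ' ∧ (m, σ) ≠ (m', σ') ∧
      A = {x | ∏ i, gaussDensity m' σ' (x i) < ∏ i, gaussDensity m σ (x i)}}) :
    ∀ S : Finset (Fin n → ℝ), Shatters 𝒜 S →
      (S.card : ℝ) ≤ 12 * Real.logb 2 (12 * Real.exp 1) :=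
  stmt_10_general n 𝒜 h𝒜
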